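/- Let t ≥ 1, let b_1, …, b_t be pairwise distinct positive reals, and let a_1, …, a_t be reals that are not all zero. Then the function h : ℝ → ℝ defined by h(x) = Σ_{i=1}^t a_i·b_i^{−x} has at most t real zeros. -/

import Mathlib

/-!
Writing `bᵢ^{-x} = exp (cᵢ x)` with distinct `cᵢ = -log bᵢ`, we show by induction on `t`
that a nonzero exponential sum `∑ aᵢ exp (cᵢ x)` has fewer than `t` zeros. Multiplying by
`exp (-c_t x)` does not move the zeros and makes the last frequency `0`; the derivative is then an
exponential sum with `t - 1` distinct frequencies, and by Rolle's theorem a function has at most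
one more zero than its derivative. If that derivative vanishes identically, the normalised sum is
the nonzero constant `a_t`.
-/

open Real

theorem Set.finite_and_ncard_le_of_forall_finset_card_le {α : Type*} {s : Set α} {n : ℕ}
    (h : ∀ t : Finset α, ↑t ⊆ s → t.card ≤ n) : s.Finite ∧ s.ncard ≤ n := by
  have hs : s.Finite := by
    by_contra hinf
    obtain ⟨t, hts, ht⟩ := Set.Infinite.exists_subset_card_eq hinf (n + 1)
    have := h t hts
    omega
  refine ⟨hs, ?_⟩
  rw [← hs.coe_toFinset, Set.ncard_coe_finset]
  exact h _ hs.coe_toFinset.subset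

theorem finite_and_ncard_zeros_le_ncard_deriv_zeros_add_one {f : ℝ → ℝ} (hf : Continuous f)
    (hf' : {x | deriv f x = 0}.Finite) :
    {x | f x = 0}.Finite ∧ {x | f x = 0}.ncard ≤ {x | deriv f x = 0}.ncard + 1 := by
  refine Set.finite_and_ncard_le_of_forall_finset_card_le fun s hs => ?_
  rw [← hf'.coe_toFinset, Set.ncard_coe_finset]
  refine Finset.card_le_of_interleaved fun x hx y hy hxy _ => ?_
  obtain ⟨z, hz, hz0⟩ := exists_deriv_eq_zero hxy hf.continuousOn ((hs hx).trans (hs hy).symm)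
  exact ⟨z, by simpa using hz0, hz⟩

noncomputable def expSum {n : ℕ} (a c : Fin n → ℝ) (x : ℝ) : ℝ :=
  ∑ i, a i * exp (c i * x)

section expSum

variable {n : ℕ}

theorem hasDerivAt_expSum (a c : Fin n → ℝ) (x : ℝ) :
    HasDerivAt (expSum a c) (expSum (a * c) c x) x := by
  unfold expSum
  refine HasDerivAt.fun_sum fun i _ => ?_
  refine ((((hasDerivAt_id' x).const_mul (c i)).exp).const_mul (a i)).congr_deriv ?_
  rw [Pi.mul_apply]
  ring

theorem continuous_expSum (a c : Fin n → ℝ) : Continuous (expSum a c) :=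
  continuous_iff_continuousAt.2 fun x => (hasDerivAt_expSum a c x).continuousAt

theorem expSum_sub_const (a c : Fin n → ℝ) (r x : ℝ) :
    expSum a (fun i => c i - r) x = exp (-(r * x)) * expSum a c x := by
  simp only [expSum, Finset.mul_sum]
  refine Finset.sum_congr rfl fun i _ => ?_
  rw [mul_left_comm, ← exp_add]
  ring_nf

theorem expSum_eq_zero_iff_sub_const (a c : Fin n → ℝ) (r x : ℝ) :
    expSum a (fun i => c i - r) x = 0 ↔ expSum a c x = 0 := by
  simp [expSum_sub_const, exp_ne_zero]

theorem expSum_succ (a c : Fin (n + 1) → ℝ) (x : ℝ) :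
    expSum a c x = expSum (fun i => a i.castSucc) (fun i => c i.castSucc) x
      + a (Fin.last n) * exp (c (Fin.last n) * x) :=
  Fin.sum_univ_castSucc _

theorem finite_and_ncard_expSum_zeros_lt (a c : Fin n → ℝ) (hc : Function.Injective c)
    (ha : ∃ i, a i ≠ 0) :
    {x | expSum a c x = 0}.Finite ∧ {x | expSum a c x = 0}.ncard < n := by
  induction n with
  | zero => exact (ha.choose).elim0
  | succ n ih =>
    set d : Fin (n + 1) → ℝ := fun i => c i - c (Fin.last n)
    have hd : Function.Injective d := fun i j h => hc (sub_left_inj.1 h)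
    have hd_last : d (Fin.last n) = 0 := sub_self _
    rw [show {x | expSum a c x = 0} = {x | expSum a d x = 0} from
      Set.ext fun x => (expSum_eq_zero_iff_sub_const a c _ x).symm]
    by_cases hderiv : ∃ i : Fin n, a i.castSucc * d i.castSucc ≠ 0
    · have hderiv_eq : deriv (expSum a d) = expSum (fun i => a i.castSucc * d i.castSucc)
          (d ∘ Fin.castSucc) := by
        ext x
        rw [(hasDerivAt_expSum a d x).deriv, expSum_succ]
        simp [hd_last, Function.comp_def]
      obtain ⟨hfin, hcard⟩ := ih _ _ (hd.comp (Fin.castSucc_injective n)) hderiv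
      rw [← hderiv_eq] at hfin hcard
      obtain ⟨hZfin, hZcard⟩ :=
        finite_and_ncard_zeros_le_ncard_deriv_zeros_add_one (continuous_expSum a d) hfin
      exact ⟨hZfin, by omega⟩
    · push Not at hderiv
      have ha_castSucc (i : Fin n) : a i.castSucc = 0 :=
        (mul_eq_zero.1 (hderiv i)).resolve_right fun h =>
          (Fin.castSucc_lt_last i).ne (hd (h.trans hd_last.symm))
      have ha_last : a (Fin.last n) ≠ 0 := by
        obtain ⟨i, hi⟩ := ha
        induction i using Fin.lastCases with
        | last => exact hi
        | cast i => exact absurd (ha_castSucc i) hi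
      have hZ : {x | expSum a d x = 0} = ∅ := by
        ext x
        rw [Set.mem_ofPred_eq, expSum_succ]
        simp [expSum, ha_castSucc, hd_last, ha_last]
      simp [hZ]

end expSum

theorem stmt_12_general (t : ℕ) (b : Fin t → ℝ) (hbpos : ∀ i, 0 < b i)
    (hbinj : Function.Injective b) (a : Fin t → ℝ) (ha : ∃ i, a i ≠ 0) :
    {x : ℝ | ∑ i, a i * (b i) ^ (-x) = 0}.Finite ∧
    {x : ℝ | ∑ i, a i * (b i) ^ (-x) = 0}.ncard ≤ t := by
  have hZ : {x : ℝ | ∑ i, a i * (b i) ^ (-x) = 0} =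
      {x | expSum a (fun i => -log (b i)) x = 0} := by
    ext x
    simp only [Set.mem_ofPred_eq, expSum, rpow_def_of_pos (hbpos _), neg_mul_comm]
  have hc : Function.Injective fun i => -log (b i) := fun i j h =>
    hbinj (log_injOn_pos (hbpos i) (hbpos j) (neg_inj.1 h))
  obtain ⟨hfin, hcard⟩ := finite_and_ncard_expSum_zeros_lt a _ hc ha
  exact hZ ▸ ⟨hfin, hcard.le⟩

/-- an exponential sum `h(x) = Σᵢ aᵢ·bᵢ^{−x}` with pairwise distinct
positive bases `bᵢ` and coefficients `aᵢ` not all zero has at most `t` real zeros. -/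
theorem stmt_12 (t : ℕ) (ht : 1 ≤ t) (b : Fin t → ℝ) (hbpos : ∀ i, 0 < b i)
    (hbinj : Function.Injective b) (a : Fin t → ℝ) (ha : ∃ i, a i ≠ 0) :
    {x : ℝ | ∑ i, a i * (b i) ^ (-x) = 0}.Finite ∧
    {x : ℝ | ∑ i, a i * (b i) ^ (-x) = 0}.ncard ≤ t :=
  stmt_12_general t b hbpos hbinj a ha
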